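/- Let (X^{(n)}_t) be irreducible Markov chains on a finite set V with stationary measures π_n, and let V^{(p)}_1,…,V^{(p)}_{𝔫_p} be disjoint nonempty subsets (wells) with V^{(p)} their union. Define θ^{(p)}_n by 1/θ^{(p)}_n = Σ_i Cap_n(V^{(p)}_i, V̆^{(p)}_i)/π_n(V^{(p)}_i), where V̆^{(p)}_i is the union of the other wells. Suppose that for all j and x ∈ V^{(p)}_j, liminf_n π_n(x)/π_n(V^{(p)}_j) > 0. Then for every sequence β_n with β_n/θ^{(p)}_n → 0 and every j, x ∈ V^{(p)}_j, lim_n P^n_x[H_{V̆^{(p)}_j} < β_n] = 0. -/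

import Mathlib

/-!
Let `u(x) = E_x[e^{-H_B/t}]`. Since `e^{-H_B/t} ≥ e^{-1}` on `{H_B ≤ t}`, we get
`P_x[H_B ≤ t] ≤ e u(x)`. Pairing the resolvent equation of `u` with an approximate equilibrium
potential of the time-reversed chain gives `t⁻¹ ∑_{y ∈ A} π(y) u(y) ≤ Cap(A, B)`, which contains
both the singleton bound and the monotonicity `Cap({x}, B) ≤ Cap(A, B)`. For the wells this yields
`P_x[H_{𝒱̆ j} ≤ β] ≤ e (β / θ) π(𝒱 j) / π(x)`, and the liminf hypothesis bounds `π(𝒱 j) / π(x)`.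
-/

open Finset Filter Topology

noncomputable section

/-- Generator of a continuous-time Markov chain with jump rates `R`. -/
def gen {V : Type*} [Fintype V] (R : V → V → ℝ) (f : V → ℝ) (x : V) : ℝ :=
  ∑ y, R x y * (f y - f x)

/-- Generator of a chain restricted to the subset `W` (e.g. a trace process). -/
def genOn {V : Type*} [Fintype V] [DecidableEq V] (W : Finset V) (R : V → V → ℝ)
    (f : V → ℝ) (x : V) : ℝ :=
  ∑ y ∈ W, R x y * (f y - f x)

/-- Detailed balance (reversibility) of `π` for the rates `R`. -/
def Reversible {V : Type*} (R : V → V → ℝ) (π : V → ℝ) : Prop :=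
  ∀ x y, π x * R x y = π y * R y x

/-- Stationarity of `π` for the rates `R`. -/
def Stationary {V : Type*} [Fintype V] (R : V → V → ℝ) (π : V → ℝ) : Prop :=
  ∀ y, ∑ x, π x * R x y = π y * ∑ z, R y z

/-- Irreducibility of the rates `R`. -/
def Irred {V : Type*} (R : V → V → ℝ) : Prop :=
  ∀ x y : V, Relation.ReflTransGen (fun a b => 0 < R a b) x y

/-- `h` is the equilibrium potential `h(x) = P_x[H_A < H_B]` : it equals `1` on `A`,
`0` on `B` and is harmonic elsewhere. -/
def IsEqPotential {V : Type*} [Fintype V] (R : V → V → ℝ) (A B : Finset V)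
    (h : V → ℝ) : Prop :=
  (∀ x ∈ A, h x = 1) ∧ (∀ x ∈ B, h x = 0) ∧ ∀ x, x ∉ A → x ∉ B → gen R h x = 0

/-- The capacity `Cap(A,B) = ∑_{x∈A} π(x) λ(x) P_x[H_B < H_A⁺]`, expressed through the
equilibrium potential `h = h_{A,B}` as `-∑_{x∈A} π(x) (L h)(x)`. -/
def capFor {V : Type*} [Fintype V] (R : V → V → ℝ) (π : V → ℝ) (A : Finset V)
    (h : V → ℝ) : ℝ :=
  ∑ x ∈ A, π x * (-(gen R h x))

/-- The generator of the chain killed upon hitting `B` (rows and columns of `B` zeroed). -/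
def killedGen {V : Type*} [Fintype V] [DecidableEq V] (R : V → V → ℝ) (B : Finset V) :
    Matrix V V ℝ :=
  fun x y => if x ∈ B ∨ y ∈ B then 0
    else (if x = y then -(∑ z, R x z) else R x y)

/-- `P_x[H_B ≤ t]`, expressed via the semigroup of the killed chain. -/
def hitLE {V : Type*} [Fintype V] [DecidableEq V] (R : V → V → ℝ) (B : Finset V)
    (x : V) (t : ℝ) : ℝ :=
  1 - ∑ y, (NormedSpace.exp (t • killedGen R B)) x y

open NormedSpace
open scoped Matrix

theorem le_of_hasDerivAt_nonpos {f f' : ℝ → ℝ} (hf : ∀ s, HasDerivAt f (f' s) s)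
    (hf' : ∀ s, 0 ≤ s → f' s ≤ 0) {t : ℝ} (ht : 0 ≤ t) : f t ≤ f 0 :=
  antitoneOn_of_hasDerivWithinAt_nonpos (convex_Ici 0)
    (fun s _ => (hf s).continuousAt.continuousWithinAt)
    (fun s _ => (hf s).hasDerivWithinAt)
    (fun s hs => hf' s (interior_subset hs)) Set.self_mem_Ici ht ht

section MatrixExp

variable {V : Type*} [Fintype V] [DecidableEq V]

attribute [local instance] Matrix.linftyOpNormedRing Matrix.linftyOpNormedAlgebra

omit [DecidableEq V] in
theorem Matrix.mulVec_apply_mono {M : Matrix V V ℝ} (hM : ∀ x y, 0 ≤ M x y) {v w : V → ℝ}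
    (hvw : ∀ y, v y ≤ w y) (x : V) : (M *ᵥ v) x ≤ (M *ᵥ w) x :=
  Finset.sum_le_sum fun y _ => mul_le_mul_of_nonneg_left (hvw y) (hM x y)

omit [DecidableEq V] in
theorem Matrix.mulVec_one_apply (M : Matrix V V ℝ) (x : V) : (M *ᵥ 1) x = ∑ y, M x y := by
  simp [Matrix.mulVec, dotProduct]

theorem Matrix.exp_apply_nonneg {N : Matrix V V ℝ} (hN : ∀ x y, 0 ≤ N x y) (x y : V) :
    0 ≤ exp N x y := by
  have hs := expSeries_summable' (𝕂 := ℝ) N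
  rw [exp_eq_tsum ℝ]
  show 0 ≤ (∑' n : ℕ, ((n.factorial : ℝ))⁻¹ • N ^ n) x y
  have hentry : (∑' n : ℕ, ((n.factorial : ℝ))⁻¹ • N ^ n) x y
      = ∑' n : ℕ, (((n.factorial : ℝ))⁻¹ • N ^ n) x y :=
    (congrFun (tsum_apply hs (x := x)) y).trans (tsum_apply (Pi.summable.1 hs x))
  rw [hentry]
  exact tsum_nonneg fun n => mul_nonneg (by positivity) (Matrix.pow_apply_nonneg hN n x y)

theorem Matrix.exp_smul_apply_nonneg {K : Matrix V V ℝ} (hK : ∀ x y, x ≠ y → 0 ≤ K x y)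
    {t : ℝ} (ht : 0 ≤ t) (x y : V) : 0 ≤ exp (t • K) x y := by
  obtain ⟨c, hc⟩ : ∃ c : ℝ, ∀ z, -K z z ≤ c :=
    ⟨∑ z, |K z z|, fun z => (neg_le_abs _).trans
      (Finset.single_le_sum (f := fun z => |K z z|) (fun _ _ => abs_nonneg _) (mem_univ z))⟩
  set N := t • K + (t * c) • (1 : Matrix V V ℝ)
  have hN (a b : V) : 0 ≤ N a b := by
    rcases eq_or_ne a b with rfl | hab
    · simp only [N, Matrix.add_apply, Matrix.smul_apply, Matrix.one_apply_eq, smul_eq_mul]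
      nlinarith [hc a]
    · simpa [N, hab] using mul_nonneg ht (hK a b hab)
  -- `t • K` is `N` shifted by the scalar `-t c`, whose exponential is a positive scalar
  have hsplit : exp (t • K) = Real.exp (-(t * c)) • exp N := by
    have hscalar : exp ((-(t * c)) • (1 : Matrix V V ℝ)) = Real.exp (-(t * c)) • 1 := by
      have := algebraMap_exp_comm (𝕂 := ℝ) (𝔸 := Matrix V V ℝ) (-(t * c))
      rw [Algebra.algebraMap_eq_smul_one, Algebra.algebraMap_eq_smul_one] at this
      rw [Real.exp_eq_exp_ℝ]
      exact this.symm
    rw [show t • K = N + (-(t * c)) • (1 : Matrix V V ℝ) by simp [N],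
      Matrix.exp_add_of_commute _ _ ((Commute.one_right N).smul_right _), hscalar,
      mul_smul_comm, mul_one]
  rw [hsplit]
  exact mul_nonneg (Real.exp_nonneg _) (Matrix.exp_apply_nonneg hN x y)

theorem hasDerivAt_exp_smul_mulVec_apply (K : Matrix V V ℝ) (v : V → ℝ) (x : V) (t : ℝ) :
    HasDerivAt (fun s : ℝ => (exp (s • K) *ᵥ v) x) ((exp (t • K) *ᵥ (K *ᵥ v)) x) t := by
  have hentry : ∀ y, HasDerivAt (fun s : ℝ => exp (s • K) x y) ((exp (t • K) * K) x y) t :=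
    fun y => ((ContinuousLinearMap.proj (R := ℝ) y).comp
      (ContinuousLinearMap.proj (R := ℝ) (φ := fun _ : V => V → ℝ) x)).hasFDerivAt.comp_hasDerivAt
        t (hasDerivAt_exp_smul_const K t)
  rw [Matrix.mulVec_mulVec]
  exact HasDerivAt.fun_sum fun y _ => (hentry y).mul_const (v y)

variable {K : Matrix V V ℝ} (hK : ∀ x y, x ≠ y → 0 ≤ K x y) (hrow : ∀ x, ∑ y, K x y ≤ 0)
include hK hrow

theorem Matrix.sum_exp_smul_apply_le_one {t : ℝ} (ht : 0 ≤ t) (x : V) :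
    ∑ y, exp (t • K) x y ≤ 1 := by
  have hmono := le_of_hasDerivAt_nonpos (fun s => hasDerivAt_exp_smul_mulVec_apply K 1 x s)
    (fun s hs => by
      simpa using Matrix.mulVec_apply_mono (Matrix.exp_smul_apply_nonneg hK hs)
        (v := K *ᵥ 1) (w := 0) (fun y => by simpa [Matrix.mulVec_one_apply] using hrow y) x) ht
  simpa [Matrix.mulVec_one_apply, Matrix.one_apply] using hmono

/-- For the killed generator `K`, `u x` is `E_x[e^{-l H}]` and this reads
`e^{-l t} P_x[H ≤ t] ≤ E_x[e^{-l H}]`; the proof shows that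
`s ↦ e^{-l s} (1 + (exp (s • K) *ᵥ (u - 1)) x)` is antitone. -/
theorem Matrix.exp_neg_mul_mul_one_sub_sum_exp_smul_le {l t : ℝ} (hl : 0 ≤ l) (ht : 0 ≤ t)
    {u : V → ℝ} (hu : ∀ x, 0 ≤ u x) (hKu : ∀ x, (K *ᵥ (u - 1)) x ≤ l * u x) (x : V) :
    Real.exp (-(l * t)) * (1 - ∑ y, exp (t • K) x y) ≤ u x := by
  have hexp (s : ℝ) : HasDerivAt (fun s => Real.exp (-(l * s))) (-l * Real.exp (-(l * s))) s := by
    simpa [mul_comm] using ((hasDerivAt_id s).const_mul l).neg.exp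
  have hmono := le_of_hasDerivAt_nonpos (t := t)
    (f := fun s => Real.exp (-(l * s)) * (1 + (exp (s • K) *ᵥ (u - 1)) x))
    (fun s => (hexp s).mul ((hasDerivAt_exp_smul_mulVec_apply K (u - 1) x s).const_add 1))
    (fun s hs => by
      have hKu' : (exp (s • K) *ᵥ (K *ᵥ (u - 1))) x ≤ l * (exp (s • K) *ᵥ u) x := by
        have := Matrix.mulVec_apply_mono (Matrix.exp_smul_apply_nonneg hK hs) (w := l • u) hKu x
        rwa [Matrix.mulVec_smul] at this
      have hsum := Matrix.sum_exp_smul_apply_le_one hK hrow hs x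
      rw [Matrix.mulVec_sub, Pi.sub_apply, Matrix.mulVec_one_apply]
      nlinarith [mul_le_mul_of_nonneg_left hKu' (Real.exp_pos (-(l * s))).le,
        mul_nonneg (mul_nonneg hl (Real.exp_pos (-(l * s))).le) (sub_nonneg.2 hsum)]) ht
  have hEu : 0 ≤ (exp (t • K) *ᵥ u) x := by
    simpa using Matrix.mulVec_apply_mono (Matrix.exp_smul_apply_nonneg hK ht) (v := 0) hu x
  simp only [Matrix.mulVec_sub, Pi.sub_apply, Matrix.mulVec_one_apply, zero_smul, mul_zero,
    neg_zero, Real.exp_zero, one_mul, exp_zero, Matrix.one_mulVec, Pi.one_apply] at hmono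
  nlinarith [Real.exp_pos (-(l * t))]

end MatrixExp

section Generator

variable {V : Type*} [Fintype V] {R : V → V → ℝ}

theorem gen_add (f g : V → ℝ) (x : V) : gen R (f + g) x = gen R f x + gen R g x := by
  simp only [gen, Pi.add_apply, ← Finset.sum_add_distrib]
  exact Finset.sum_congr rfl fun _ _ => by ring

theorem gen_smul (c : ℝ) (f : V → ℝ) (x : V) : gen R (c • f) x = c * gen R f x := by
  simp only [gen, Pi.smul_apply, smul_eq_mul, Finset.mul_sum]
  exact Finset.sum_congr rfl fun _ _ => by ring

theorem gen_sub (f g : V → ℝ) (x : V) : gen R (f - g) x = gen R f x - gen R g x := by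
  simp only [gen, Pi.sub_apply, ← Finset.sum_sub_distrib]
  exact Finset.sum_congr rfl fun _ _ => by ring

theorem gen_one (x : V) : gen R 1 x = 0 := by simp [gen]

variable (hR : ∀ x y, 0 ≤ R x y)
include hR

theorem gen_nonneg_of_forall_le {v : V → ℝ} {x : V} (hx : ∀ y, v x ≤ v y) : 0 ≤ gen R v x :=
  Finset.sum_nonneg fun y _ => mul_nonneg (hR x y) (sub_nonneg.2 (hx y))

theorem gen_nonpos_of_forall_le {v : V → ℝ} {x : V} (hx : ∀ y, v y ≤ v x) : gen R v x ≤ 0 :=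
  Finset.sum_nonpos fun y _ => mul_nonpos_of_nonneg_of_nonpos (hR x y) (sub_nonpos.2 (hx y))

theorem nonneg_of_gen_le_mul {l : ℝ} (hl : 0 < l) {D : Finset V} {v : V → ℝ}
    (hD : ∀ x ∈ D, 0 ≤ v x) (hgen : ∀ x ∉ D, gen R v x ≤ l * v x) (x : V) : 0 ≤ v x := by
  obtain ⟨m, -, hm⟩ := Finset.exists_min_image Finset.univ v ⟨x, Finset.mem_univ x⟩
  have hmin : 0 ≤ v m := by
    by_cases hmD : m ∈ D
    · exact hD m hmD
    · have := gen_nonneg_of_forall_le hR (fun y => hm y (Finset.mem_univ y))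
      nlinarith [hgen m hmD]
  exact hmin.trans (hm x (Finset.mem_univ x))

end Generator

section ResolventPotential

variable {V : Type*} [Fintype V] [DecidableEq V]

/-- `u x = E_x[e^{-l H_D}; X_{H_D} ∈ T]`; for `l = 0`, `D = A ∪ B`, `T = A` with `A`, `B`
disjoint, this is `IsEqPotential R A B`. -/
def IsResolventPotential (R : V → V → ℝ) (D T : Finset V) (l : ℝ) (u : V → ℝ) : Prop :=
  (∀ x ∈ T, u x = 1) ∧ (∀ x ∈ D, x ∉ T → u x = 0) ∧ ∀ x ∉ D, gen R u x = l * u x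

variable {R : V → V → ℝ} {D T : Finset V} {l : ℝ} {u : V → ℝ}

namespace IsResolventPotential

variable (hu : IsResolventPotential R D T l u) (hR : ∀ x y, 0 ≤ R x y) (hl : 0 < l)
include hu hR hl

theorem nonneg (x : V) : 0 ≤ u x := by
  refine nonneg_of_gen_le_mul hR hl (fun y hy => ?_) (fun y hy => (hu.2.2 y hy).le) x
  by_cases hyT : y ∈ T
  · rw [hu.1 y hyT]; exact zero_le_one
  · rw [hu.2.1 y hy hyT]

theorem le_one (x : V) : u x ≤ 1 := by
  have h := nonneg_of_gen_le_mul (D := D) (v := 1 - u) hR hl (fun y hy => ?_) (fun y hy => ?_) x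
  · simpa using h
  · by_cases hyT : y ∈ T
    · simp [hu.1 y hyT]
    · simp [hu.2.1 y hy hyT]
  · rw [gen_sub, gen_one, hu.2.2 y hy]
    simp only [Pi.sub_apply, Pi.one_apply]
    linarith

end IsResolventPotential

variable (R D l) in
def dirichletOp : (V → ℝ) →ₗ[ℝ] (V → ℝ) where
  toFun v x := if x ∈ D then v x else l * v x - gen R v x
  map_add' f g := by
    funext x
    simp only [Pi.add_apply, gen_add]
    split_ifs <;> ring
  map_smul' c f := by
    funext x
    simp only [Pi.smul_apply, smul_eq_mul, gen_smul, RingHom.id_apply]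
    split_ifs <;> ring

theorem nonneg_of_dirichletOp_nonneg (hR : ∀ x y, 0 ≤ R x y) (hl : 0 < l) {v : V → ℝ}
    (hv : ∀ x, 0 ≤ dirichletOp R D l v x) (x : V) : 0 ≤ v x := by
  refine nonneg_of_gen_le_mul (D := D) hR hl (fun y hy => ?_) (fun y hy => ?_) x
  · simpa [dirichletOp, hy] using hv y
  · have := hv y
    simp only [dirichletOp, LinearMap.coe_mk, AddHom.coe_mk, if_neg hy] at this
    linarith

theorem dirichletOp_injective (hR : ∀ x y, 0 ≤ R x y) (hl : 0 < l) :
    Function.Injective (dirichletOp R D l) := by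
  refine (injective_iff_map_eq_zero _).2 fun v hv => funext fun x => le_antisymm ?_ ?_
  · simpa using nonneg_of_dirichletOp_nonneg (D := D) hR hl (v := -v) (by simp [hv]) x
  · exact nonneg_of_dirichletOp_nonneg (D := D) hR hl (by simp [hv]) x

theorem exists_isResolventPotential (hR : ∀ x y, 0 ≤ R x y) (hl : 0 < l) (hTD : T ⊆ D) :
    ∃ u, IsResolventPotential R D T l u := by
  obtain ⟨u, hu⟩ := LinearMap.injective_iff_surjective.1 (dirichletOp_injective (D := D) hR hl)
    (fun x => if x ∈ T then 1 else 0)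
  have hu' (x : V) := congrFun hu x
  refine ⟨u, fun x hx => ?_, fun x hx hxT => ?_, fun x hx => ?_⟩
  · simpa [dirichletOp, hTD hx, hx] using hu' x
  · simpa [dirichletOp, hx, hxT] using hu' x
  · have := hu' x
    simp only [dirichletOp, LinearMap.coe_mk, AddHom.coe_mk, if_neg hx,
      if_neg (fun h => hx (hTD h))] at this
    linarith

end ResolventPotential

section KilledChain

variable {V : Type*} [Fintype V] [DecidableEq V] {R : V → V → ℝ} {B : Finset V}

theorem killedGen_apply_nonneg (hR : ∀ x y, 0 ≤ R x y) {x y : V} (hxy : x ≠ y) :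
    0 ≤ killedGen R B x y := by
  unfold killedGen
  split_ifs <;> first | exact le_rfl | exact hR x y

theorem sum_killedGen_apply_nonpos (hR : ∀ x y, 0 ≤ R x y) (x : V) :
    ∑ y, killedGen R B x y ≤ 0 := by
  by_cases hx : x ∈ B
  · simp [killedGen, hx]
  have hle (y : V) : killedGen R B x y ≤ R x y - if y = x then ∑ z, R x z else 0 := by
    unfold killedGen
    rcases eq_or_ne y x with rfl | hyx
    · simp [hx, hR y y]
    · by_cases hyB : y ∈ B
      · simp [hyB, hyx, hR x y]
      · simp [hx, hyB, hyx, Ne.symm hyx]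
  calc ∑ y, killedGen R B x y ≤ ∑ y, (R x y - if y = x then ∑ z, R x z else 0) :=
        Finset.sum_le_sum fun y _ => hle y
    _ = 0 := by simp [Finset.sum_sub_distrib]

theorem killedGen_mulVec_apply (hRdiag : ∀ x, R x x = 0) {φ : V → ℝ} (hφ : ∀ y ∈ B, φ y = 0)
    {x : V} (hx : x ∉ B) : (killedGen R B *ᵥ φ) x = gen R φ x := by
  have hterm (y : V) : killedGen R B x y * φ y
      = R x y * φ y - if y = x then (∑ z, R x z) * φ x else 0 := by
    unfold killedGen
    by_cases hyB : y ∈ B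
    · simp [hyB, hφ y hyB, show y ≠ x by rintro rfl; exact hx hyB]
    · rcases eq_or_ne y x with rfl | hyx
      · simp [hx, hRdiag]
      · simp [hx, hyB, hyx, Ne.symm hyx]
  rw [Matrix.mulVec, dotProduct, Finset.sum_congr rfl fun y _ => hterm y, Finset.sum_sub_distrib,
    Finset.sum_ite_eq' Finset.univ x, if_pos (Finset.mem_univ x), gen]
  simp only [mul_sub, Finset.sum_sub_distrib, Finset.sum_mul]

theorem killedGen_mulVec_apply_of_mem (φ : V → ℝ) {x : V} (hx : x ∈ B) :
    (killedGen R B *ᵥ φ) x = 0 := by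
  simp [Matrix.mulVec, dotProduct, killedGen, hx]

variable (hR : ∀ x y, 0 ≤ R x y)
include hR

theorem hitLE_nonneg (x : V) {t : ℝ} (ht : 0 ≤ t) : 0 ≤ hitLE R B x t :=
  sub_nonneg.2 (Matrix.sum_exp_smul_apply_le_one (fun _ _ => killedGen_apply_nonneg hR)
    (sum_killedGen_apply_nonpos hR) ht x)

theorem hitLE_le_exp_one_mul (hRdiag : ∀ x, R x x = 0) {t : ℝ} (ht : 0 < t) {u : V → ℝ}
    (hu : IsResolventPotential R B B t⁻¹ u) (x : V) : hitLE R B x t ≤ Real.exp 1 * u x := by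
  have hu0 := hu.nonneg hR (inv_pos.2 ht)
  have hKu (y : V) : (killedGen R B *ᵥ (u - 1)) y ≤ t⁻¹ * u y := by
    by_cases hy : y ∈ B
    · rw [killedGen_mulVec_apply_of_mem _ hy]
      exact mul_nonneg (inv_pos.2 ht).le (hu0 y)
    · rw [killedGen_mulVec_apply hRdiag (fun z hz => by simp [hu.1 z hz]) hy, gen_sub, gen_one,
        hu.2.2 y hy, sub_zero]
  have := Matrix.exp_neg_mul_mul_one_sub_sum_exp_smul_le (fun _ _ => killedGen_apply_nonneg hR)
    (sum_killedGen_apply_nonpos hR) (inv_pos.2 ht).le ht.le hu0 hKu x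
  rw [inv_mul_cancel₀ ht.ne'] at this
  rw [hitLE]
  calc _ = Real.exp 1 * (Real.exp (-1) * (1 - ∑ y, exp (t • killedGen R B) x y)) := by
        rw [← mul_assoc, ← Real.exp_add]; norm_num
    _ ≤ Real.exp 1 * u x := mul_le_mul_of_nonneg_left this (Real.exp_pos 1).le

end KilledChain

section TimeReversal

variable {V : Type*} [Fintype V]

def timeReversal (R : V → V → ℝ) (π : V → ℝ) : V → V → ℝ := fun x y => π y * R y x / π x

variable {R : V → V → ℝ} {π : V → ℝ}

omit [Fintype V] in
theorem timeReversal_nonneg (hR : ∀ x y, 0 ≤ R x y) (hπ : ∀ x, 0 ≤ π x) (x y : V) :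
    0 ≤ timeReversal R π x y :=
  div_nonneg (mul_nonneg (hπ y) (hR y x)) (hπ x)

theorem sum_mul_mul_gen_eq (hπ : ∀ x, π x ≠ 0) (hstat : Stationary R π) (f g : V → ℝ) :
    ∑ x, π x * f x * gen R g x = ∑ x, π x * g x * gen (timeReversal R π) f x := by
  have hrow (x : V) : ∑ y, timeReversal R π x y = ∑ y, R x y := by
    simp only [timeReversal, ← Finset.sum_div, hstat x]
    field_simp [hπ x]
  have hmul (x y : V) : π x * timeReversal R π x y = π y * R y x := by
    simp only [timeReversal]
    field_simp [hπ x]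
  have hleft (x : V) : π x * f x * gen R g x
      = ∑ y, π x * R x y * f x * g y - π x * f x * g x * ∑ y, R x y := by
    simp only [gen, Finset.mul_sum, ← Finset.sum_sub_distrib]
    exact Finset.sum_congr rfl fun y _ => by ring
  have hright (x : V) : π x * g x * gen (timeReversal R π) f x
      = ∑ y, π y * R y x * f y * g x - π x * f x * g x * ∑ y, R x y := by
    rw [← hrow, gen, Finset.mul_sum, Finset.mul_sum, ← Finset.sum_sub_distrib]
    refine Finset.sum_congr rfl fun y _ => ?_
    rw [← hmul]
    ring
  simp only [hleft, hright, Finset.sum_sub_distrib]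
  rw [Finset.sum_comm]

end TimeReversal

section Capacity

variable {V : Type*} [Fintype V] [DecidableEq V] {R : V → V → ℝ} {π : V → ℝ} {A B : Finset V}
  {h : V → ℝ}

variable (hR : ∀ x y, 0 ≤ R x y) (hπ : ∀ x, 0 < π x) (hstat : Stationary R π)
  (hAB : Disjoint A B) (hpot : IsEqPotential R A B h)
include hR hπ hstat hAB hpot

/-- The adjoint `e`-potential `g` of `(A, B)` stands in for the adjoint equilibrium potential,
which need not exist; the price is the error term `e ∑ π |h|`. -/
theorem mul_sum_le_capFor_add {l e : ℝ} (hl : 0 < l) (he : 0 < e) {u g : V → ℝ}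
    (hu : IsResolventPotential R B B l u)
    (hg : IsResolventPotential (timeReversal R π) (A ∪ B) A e g) :
    l * ∑ x ∈ A, π x * u x ≤ capFor R π A h + e * ∑ x, π x * |h x| := by
  have hR' := timeReversal_nonneg hR fun x => (hπ x).le
  have hu0 := hu.nonneg hR hl
  have hu1 := hu.le_one hR hl
  have hg0 := hg.nonneg hR' he
  have hg1 := hg.le_one hR' he
  have hgB (x : V) (hx : x ∈ B) : g x = 0 :=
    hg.2.1 x (Finset.mem_union_right _ hx) (Finset.disjoint_right.1 hAB hx)
  have hxAB {x : V} (hxA : x ∉ A) (hxB : x ∉ B) : x ∉ A ∪ B := by simp [hxA, hxB]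
  -- pair `g` with `f = u + h - 1`, which vanishes on `B` and equals `u` on `A`
  have hpair := sum_mul_mul_gen_eq (fun x => (hπ x).ne') hstat g (u + h - 1)
  have hlower (x : V) : (if x ∈ A then π x * (l * u x + gen R h x) else 0)
      ≤ π x * g x * gen R (u + h - 1) x := by
    rw [gen_sub, gen_add, gen_one, sub_zero]
    by_cases hxA : x ∈ A
    · rw [if_pos hxA, hg.1 x hxA, hu.2.2 x (Finset.disjoint_left.1 hAB hxA), mul_one]
    by_cases hxB : x ∈ B
    · simp [hxA, hgB x hxB]
    · rw [if_neg hxA, hu.2.2 x hxB, hpot.2.2 x hxA hxB, add_zero]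
      exact mul_nonneg (mul_nonneg (hπ x).le (hg0 x)) (mul_nonneg hl.le (hu0 x))
  have hupper (x : V) : π x * (u + h - 1) x * gen (timeReversal R π) g x ≤ e * (π x * |h x|) := by
    simp only [Pi.add_apply, Pi.sub_apply, Pi.one_apply]
    by_cases hxA : x ∈ A
    · have hmax := gen_nonpos_of_forall_le hR' (x := x) (v := g) fun y => by
        rw [hg.1 x hxA]; exact hg1 y
      calc _ = π x * u x * gen (timeReversal R π) g x := by rw [hpot.1 x hxA]; ring
        _ ≤ 0 := mul_nonpos_of_nonneg_of_nonpos (mul_nonneg (hπ x).le (hu0 x)) hmax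
        _ ≤ e * (π x * |h x|) := mul_nonneg he.le (mul_nonneg (hπ x).le (abs_nonneg _))
    by_cases hxB : x ∈ B
    · rw [hpot.2.1 x hxB, hu.1 x hxB]
      simp only [add_zero, sub_self, mul_zero, zero_mul]
      exact mul_nonneg he.le (mul_nonneg (hπ x).le (abs_nonneg _))
    · rw [hg.2.2 x (hxAB hxA hxB)]
      have hgh : (u x + h x - 1) * g x ≤ |h x| := by
        nlinarith [hu1 x, hg0 x, hg1 x, le_abs_self (h x), abs_nonneg (h x)]
      nlinarith [mul_le_mul_of_nonneg_left hgh (mul_nonneg he.le (hπ x).le)]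
  have hsumA : ∑ x, (if x ∈ A then π x * (l * u x + gen R h x) else 0)
      = l * ∑ x ∈ A, π x * u x - capFor R π A h := by
    rw [Finset.sum_ite_mem, Finset.univ_inter, capFor, Finset.mul_sum, ← Finset.sum_sub_distrib]
    exact Finset.sum_congr rfl fun x _ => by ring
  calc l * ∑ x ∈ A, π x * u x
      = ∑ x, (if x ∈ A then π x * (l * u x + gen R h x) else 0) + capFor R π A h := by
        rw [hsumA]; ring
    _ ≤ ∑ x, π x * (u + h - 1) x * gen (timeReversal R π) g x + capFor R π A h := by
        rw [← hpair]; exact add_le_add_left (Finset.sum_le_sum fun x _ => hlower x) _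
    _ ≤ e * ∑ x, π x * |h x| + capFor R π A h := by
        rw [Finset.mul_sum]; exact add_le_add_left (Finset.sum_le_sum fun x _ => hupper x) _
    _ = capFor R π A h + e * ∑ x, π x * |h x| := add_comm _ _

theorem mul_sum_le_capFor {l : ℝ} (hl : 0 < l) {u : V → ℝ} (hu : IsResolventPotential R B B l u) :
    l * ∑ x ∈ A, π x * u x ≤ capFor R π A h := by
  have hlim : Tendsto (fun e => capFor R π A h + e * ∑ x, π x * |h x|) (𝓝[>] 0)
      (𝓝 (capFor R π A h)) := by
    have hcont : Continuous fun e : ℝ => capFor R π A h + e * ∑ x, π x * |h x| := by fun_prop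
    simpa using (hcont.tendsto 0).mono_left nhdsWithin_le_nhds
  refine ge_of_tendsto hlim (eventually_nhdsWithin_of_forall fun e (he : 0 < e) => ?_)
  obtain ⟨g, hg⟩ := exists_isResolventPotential (timeReversal_nonneg hR fun x => (hπ x).le) he
    (Finset.subset_union_left (s₂ := B))
  exact mul_sum_le_capFor_add hR hπ hstat hAB hpot hl he hu hg

theorem capFor_nonneg : 0 ≤ capFor R π A h := by
  obtain ⟨u, hu⟩ := exists_isResolventPotential hR one_pos (subset_refl B)
  refine le_trans ?_ (mul_sum_le_capFor hR hπ hstat hAB hpot one_pos hu)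
  exact mul_nonneg zero_le_one
    (Finset.sum_nonneg fun x _ => mul_nonneg (hπ x).le (hu.nonneg hR one_pos x))

theorem hitLE_le_capFor (hRdiag : ∀ x, R x x = 0) {x : V} (hx : x ∈ A) {t : ℝ} (ht : 0 ≤ t) :
    hitLE R B x t ≤ Real.exp 1 * t * capFor R π A h / π x := by
  rcases ht.eq_or_lt with rfl | ht
  · simp [hitLE, Matrix.one_apply]
  obtain ⟨u, hu⟩ := exists_isResolventPotential hR (inv_pos.2 ht) (subset_refl B)
  have hcap := mul_sum_le_capFor hR hπ hstat hAB hpot (inv_pos.2 ht) hu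
  have hsingle : π x * u x ≤ ∑ y ∈ A, π y * u y :=
    Finset.single_le_sum (f := fun y => π y * u y)
      (fun y _ => mul_nonneg (hπ y).le (hu.nonneg hR (inv_pos.2 ht) y)) hx
  have hux : u x ≤ t * capFor R π A h / π x := by
    rw [le_div_iff₀ (hπ x)]
    have := mul_le_mul_of_nonneg_left (hsingle.trans ((inv_mul_le_iff₀ ht).1 hcap)) ht.le
    nlinarith
  calc hitLE R B x t ≤ Real.exp 1 * u x := hitLE_le_exp_one_mul hR hRdiag ht hu x
    _ ≤ Real.exp 1 * (t * capFor R π A h / π x) := by gcongr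
    _ = Real.exp 1 * t * capFor R π A h / π x := by ring

end Capacity

theorem capFor_div_le_sum {V ι : Type*} [Fintype V] [DecidableEq V] [Fintype ι]
    {R : V → V → ℝ} {π : V → ℝ} {𝒱 𝒲 : ι → Finset V} {h : ι → V → ℝ}
    (hR : ∀ x y, 0 ≤ R x y) (hπ : ∀ x, 0 < π x) (hstat : Stationary R π)
    (hdisj : ∀ i, Disjoint (𝒱 i) (𝒲 i)) (hpot : ∀ i, IsEqPotential R (𝒱 i) (𝒲 i) (h i)) (j : ι) :
    capFor R π (𝒱 j) (h j) / ∑ z ∈ 𝒱 j, π z ≤ ∑ i, capFor R π (𝒱 i) (h i) / ∑ z ∈ 𝒱 i, π z :=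
  Finset.single_le_sum (f := fun i => capFor R π (𝒱 i) (h i) / ∑ z ∈ 𝒱 i, π z)
    (fun i _ => div_nonneg (capFor_nonneg hR hπ hstat (hdisj i) (hpot i))
      (Finset.sum_nonneg fun z _ => (hπ z).le)) (Finset.mem_univ j)

theorem disjoint_biUnion_erase {ι V : Type*} [Fintype ι] [DecidableEq ι] [DecidableEq V]
    {𝒱 : ι → Finset V} (h𝒱 : ∀ i k, i ≠ k → Disjoint (𝒱 i) (𝒱 k)) (i : ι) :
    Disjoint (𝒱 i) ((Finset.univ.erase i).biUnion 𝒱) :=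
  (Finset.disjoint_biUnion_right _ _ _).2 fun k hk => h𝒱 i k (Finset.ne_of_mem_erase hk).symm

theorem stmt18_general {V : Type*} [Fintype V] [DecidableEq V]
    {ι : Type*} [Fintype ι] [DecidableEq ι]
    (Rn : ℕ → V → V → ℝ) (πn : ℕ → V → ℝ)
    (hRnn : ∀ n x y, 0 ≤ Rn n x y) (hRdiag : ∀ n x, Rn n x x = 0)
    (hπpos : ∀ n x, 0 < πn n x) (hstat : ∀ n, Stationary (Rn n) (πn n))
    (𝒱 : ι → Finset V)
    (h𝒱disj : ∀ i k, i ≠ k → Disjoint (𝒱 i) (𝒱 k))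
    -- the equilibrium potentials defining the capacities `Cap_n(𝒱 i, 𝒱̆ i)`:
    (h : ℕ → ι → V → ℝ)
    (hpot : ∀ n i, IsEqPotential (Rn n) (𝒱 i)
      ((Finset.univ.erase i).biUnion 𝒱) (h n i))
    (θ : ℕ → ℝ) (hθpos : ∀ n, 0 < θ n)
    (hθ : ∀ n, (θ n)⁻¹ =
      ∑ i, capFor (Rn n) (πn n) (𝒱 i) (h n i) / ∑ x ∈ 𝒱 i, πn n x)
    -- `liminf_n πₙ(x)/πₙ(𝒱 j) > 0`:
    (hratio : ∀ j, ∀ x ∈ 𝒱 j, ∃ c : ℝ, 0 < c ∧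
      ∀ᶠ n in atTop, c ≤ πn n x / ∑ z ∈ 𝒱 j, πn n z)
    (β : ℕ → ℝ) (hβnn : ∀ n, 0 ≤ β n)
    (hβθ : Tendsto (fun n => β n / θ n) atTop (𝓝 0)) :
    ∀ j, ∀ x ∈ 𝒱 j,
      Tendsto (fun n => hitLE (Rn n) ((Finset.univ.erase j).biUnion 𝒱) x (β n))
        atTop (𝓝 0) := by
  intro j x hx
  obtain ⟨c, hc, hcev⟩ := hratio j x hx
  have hdisj (i : ι) := disjoint_biUnion_erase h𝒱disj i
  have hbound : ∀ᶠ n in atTop, hitLE (Rn n) ((Finset.univ.erase j).biUnion 𝒱) x (β n)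
      ≤ Real.exp 1 / c * (β n / θ n) := by
    filter_upwards [hcev] with n hn
    have hS : 0 < ∑ z ∈ 𝒱 j, πn n z := Finset.sum_pos (fun z _ => hπpos n z) ⟨x, hx⟩
    have hcap : capFor (Rn n) (πn n) (𝒱 j) (h n j) ≤ (θ n)⁻¹ * ∑ z ∈ 𝒱 j, πn n z := by
      rw [← div_le_iff₀ hS, hθ n]
      exact capFor_div_le_sum (hRnn n) (hπpos n) (hstat n) hdisj (hpot n) j
    have hratio' : (∑ z ∈ 𝒱 j, πn n z) / πn n x ≤ c⁻¹ := by simpa using inv_anti₀ hc hn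
    have hβθ' := div_nonneg (hβnn n) (hθpos n).le
    calc _ ≤ Real.exp 1 * β n * capFor (Rn n) (πn n) (𝒱 j) (h n j) / πn n x :=
          hitLE_le_capFor (hRnn n) (hπpos n) (hstat n) (hdisj j) (hpot n j) (hRdiag n) hx (hβnn n)
      _ ≤ Real.exp 1 * β n * ((θ n)⁻¹ * ∑ z ∈ 𝒱 j, πn n z) / πn n x := by
          have := hβnn n
          gcongr
          exact (hπpos n x).le
      _ = Real.exp 1 * (β n / θ n) * ((∑ z ∈ 𝒱 j, πn n z) / πn n x) := by ring
      _ ≤ Real.exp 1 / c * (β n / θ n) := by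
          rw [div_eq_mul_inv _ c, mul_right_comm]
          gcongr
  refine squeeze_zero' (Eventually.of_forall fun n => hitLE_nonneg (hRnn n) x (hβnn n)) hbound ?_
  simpa using hβθ.const_mul (Real.exp 1 / c)

/-- wells `𝒱 i` with capacities defining the time scale `θₙ` by
`θₙ⁻¹ = ∑_i Cap_n(𝒱 i, 𝒱̆ i)/πₙ(𝒱 i)`.  If `liminf_n πₙ(x)/πₙ(𝒱 j) > 0` on each well
and `βₙ/θₙ → 0`, then `P^n_x[H_{𝒱̆ j} < βₙ] → 0` for every `x ∈ 𝒱 j`. -/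
theorem stmt18 {V : Type*} [Fintype V] [DecidableEq V]
    {ι : Type*} [Fintype ι] [DecidableEq ι]
    (Rn : ℕ → V → V → ℝ) (πn : ℕ → V → ℝ)
    (hRnn : ∀ n x y, 0 ≤ Rn n x y) (hRdiag : ∀ n x, Rn n x x = 0)
    (hirr : ∀ n, Irred (Rn n))
    (hπpos : ∀ n x, 0 < πn n x) (hstat : ∀ n, Stationary (Rn n) (πn n))
    (𝒱 : ι → Finset V) (h𝒱ne : ∀ i, (𝒱 i).Nonempty)
    (h𝒱disj : ∀ i k, i ≠ k → Disjoint (𝒱 i) (𝒱 k))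
    -- the equilibrium potentials defining the capacities `Cap_n(𝒱 i, 𝒱̆ i)`:
    (h : ℕ → ι → V → ℝ)
    (hpot : ∀ n i, IsEqPotential (Rn n) (𝒱 i)
      ((Finset.univ.erase i).biUnion 𝒱) (h n i))
    (θ : ℕ → ℝ) (hθpos : ∀ n, 0 < θ n)
    (hθ : ∀ n, (θ n)⁻¹ =
      ∑ i, capFor (Rn n) (πn n) (𝒱 i) (h n i) / ∑ x ∈ 𝒱 i, πn n x)
    -- `liminf_n πₙ(x)/πₙ(𝒱 j) > 0`:
    (hratio : ∀ j, ∀ x ∈ 𝒱 j, ∃ c : ℝ, 0 < c ∧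
      ∀ᶠ n in atTop, c ≤ πn n x / ∑ z ∈ 𝒱 j, πn n z)
    (β : ℕ → ℝ) (hβnn : ∀ n, 0 ≤ β n)
    (hβθ : Tendsto (fun n => β n / θ n) atTop (𝓝 0)) :
    ∀ j, ∀ x ∈ 𝒱 j,
      Tendsto (fun n => hitLE (Rn n) ((Finset.univ.erase j).biUnion 𝒱) x (β n))
        atTop (𝓝 0) :=
  stmt18_general Rn πn hRnn hRdiag hπpos hstat 𝒱 h𝒱disj h hpot θ hθpos hθ hratio β hβnn hβθ
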